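/- arXiv:1602.03985 — 3 statements merged into one kernel-verified Lean document; each statement's English description precedes it below -/
import Mathlib

section
/- If a connected irreflexive bipartite graph H is not a complete bipartite graph, then H contains an induced path on four vertices P4 (path of length 3) whose endpoints lie on opposite sides of the bipartition. -/
/-- If a connected irreflexive bipartite graph `H` (bipartition `(A, Aᶜ)`) is not
complete bipartite, then it contains an induced path on four vertices `a-b-c-d`
whose endpoints lie on opposite sides of the bipartition. -/
theorem stmt1 {V : Type*} (H : SimpleGraph V) (A : Set V)
    (hbip : ∀ u v : V, H.Adj u v → (u ∈ A ↔ v ∉ A))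
    (hconn : H.Connected)
    (hnotcb : ¬ ∀ u ∈ A, ∀ v ∉ A, H.Adj u v) :
    ∃ a b c d : V, a ∈ A ∧ d ∉ A ∧
      H.Adj a b ∧ H.Adj b c ∧ H.Adj c d ∧
      a ≠ c ∧ b ≠ d ∧ a ≠ d ∧
      ¬ H.Adj a c ∧ ¬ H.Adj b d ∧ ¬ H.Adj a d := by
  push_neg at hnotcb
  obtain ⟨u, hu, v, hv, huv⟩ := hnotcb
  obtain ⟨p, hp⟩ := (hconn u v).exists_walk_length_eq_dist
  -- destructure the first three steps of the shortest walk
  rcases p with _ | @⟨_, b, _, hab, p⟩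
  · exact absurd hu hv
  rcases p with _ | @⟨_, c, _, hbc, p⟩
  · exact absurd hab huv
  have hb : b ∉ A := (hbip u b hab).mp hu
  have hc : c ∈ A := by
    by_contra hcA
    exact hb ((hbip b c hbc).mpr hcA)
  rcases p with _ | @⟨_, d, _, hcd, q⟩
  · exact absurd hc hv
  have hd : d ∉ A := (hbip c d hcd).mp hc
  -- distance from u to d is exactly 3
  simp only [SimpleGraph.Walk.length_cons] at hp
  have hdistle : H.dist u d ≤ 3 := by
    have := SimpleGraph.dist_le (SimpleGraph.Walk.cons hab
      (SimpleGraph.Walk.cons hbc hcd.toWalk))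
    simpa using this
  have hdistge : 3 ≤ H.dist u d := by
    have h1 : H.dist u v ≤ H.dist u d + H.dist d v := hconn.dist_triangle
    have h2 : H.dist d v ≤ q.length := SimpleGraph.dist_le q
    omega
  refine ⟨u, b, c, d, hu, hd, hab, hbc, hcd, ?_, ?_, ?_, ?_, ?_, ?_⟩
  · rintro rfl
    have := SimpleGraph.dist_le hcd.toWalk
    simp at this; omega
  · rintro rfl
    have := SimpleGraph.dist_le hab.toWalk
    simp at this; omega
  · rintro rfl; exact hd hu
  · intro h; exact ((hbip u c h).mp hu) hc
  · intro h; exact hb ((hbip b d h).mpr hd)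
  · intro h
    have := SimpleGraph.dist_le h.toWalk
    simp at this; omega
end

section
/- Let A be a q-by-q 0,1-matrix in staircase form with row intervals [alpha_i, beta_i]. Define a map from monotone Boolean sequences to colours: a sequence x_0 >= x_1 >= ... >= x_q in {0,1}^{q+1} with x_0 = 1 and x_q = 0 corresponds to the unique colour i with x_{i-1}=1 and x_i=0. Then for colours i (row) and k (column), A_{i,k} = 1 if and only if the corresponding monotone sequences x (for i) and y (for k) satisfy: for all j in {1,...,q}, x_{j-1} = 1 implies y_{alpha_j - 1} = 1, and y_{beta_j} = 1 implies x_j = 1. -/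
/-- Let `A` be a `q × q` 0,1-matrix in staircase form (row `j` has `1`s exactly
in the column interval `[α j, β j]`, with `α`, `β` non-decreasing).  Monotone
(non-increasing) Boolean sequences `x : Fin (q+1) → Bool` with `x 0 = true` and
`x q = false` correspond to colours `i : Fin q` via `x i = true`, `x (i+1) = false`
(with 0-based colours; in 1-based notation, colour `i` has `x_{i-1} = 1`,
`x_i = 0`).  Then, for a row colour `i` with sequence `x` and a column colour
`k` with sequence `y`, `A i k = 1` if and only if for all `j`,
`x_{j-1} = 1 → y_{α j - 1} = 1` and `y_{β j} = 1 → x_j = 1`. -/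
theorem stmt15 {q : ℕ} (A : Fin q → Fin q → Bool)
    (α β : Fin q → Fin q) (hαβ : ∀ j, α j ≤ β j)
    (hA : ∀ j l, A j l = true ↔ α j ≤ l ∧ l ≤ β j)
    (hα : Monotone α) (hβ : Monotone β)
    (i k : Fin q) (x y : Fin (q + 1) → Bool)
    (hx : Antitone x) (hx0 : x 0 = true) (hxq : x (Fin.last q) = false)
    (hxi : x i.castSucc = true) (hxi' : x i.succ = false)
    (hy : Antitone y) (hy0 : y 0 = true) (hyq : y (Fin.last q) = false)
    (hyk : y k.castSucc = true) (hyk' : y k.succ = false) :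
    A i k = true ↔
      ∀ j : Fin q,
        (x j.castSucc = true → y (α j).castSucc = true) ∧
        (y (β j).succ = true → x j.succ = true) := by
  have key : ∀ (z : Fin (q+1) → Bool) (c : Fin q), Antitone z →
      z c.castSucc = true → z c.succ = false →
      ∀ m : Fin (q+1), z m = true ↔ (m : ℕ) ≤ (c : ℕ) := by
    intro z c hz hc hc' m
    constructor
    · intro h
      by_contra hlt
      push_neg at hlt
      have : z m ≤ z c.succ := hz (by simpa [Fin.le_def, Fin.val_succ] using hlt)
      rw [h, hc'] at this
      exact absurd this (by simp)
    · intro h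
      have : z c.castSucc ≤ z m := hz (by simpa [Fin.le_def] using h)
      rw [hc] at this
      exact top_le_iff.mp this
  have hxm := key x i hx hxi hxi'
  have hym := key y k hy hyk hyk'
  rw [hA]
  constructor
  · rintro ⟨h1, h2⟩ j
    constructor
    · intro hj
      rw [hxm] at hj
      rw [hym]
      have : α j ≤ α i := hα (by exact_mod_cast hj)
      simpa using le_trans (by exact_mod_cast this) (by exact_mod_cast h1)
    · intro hj
      rw [hym] at hj
      rw [hxm]
      simp only [Fin.val_succ] at hj ⊢
      have hβlt : (β j : ℕ) < (k : ℕ) := by omega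
      have hji : (j : ℕ) < (i : ℕ) := by
        by_contra hle
        push_neg at hle
        have : β i ≤ β j := hβ (by exact_mod_cast hle)
        have h2' : (k : ℕ) ≤ (β i : ℕ) := by exact_mod_cast h2
        have : (β i : ℕ) ≤ (β j : ℕ) := by exact_mod_cast this
        omega
      omega
  · intro h
    obtain ⟨h1, h2⟩ := h i
    constructor
    · have := h1 (by rw [hxm]; simp)
      rw [hym] at this
      exact_mod_cast this
    · by_contra hlt
      push_neg at hlt
      have : y (β i).succ = true := by
        rw [hym]; simp only [Fin.val_succ]
        have : (β i : ℕ) < (k : ℕ) := by exact_mod_cast hlt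
        omega
      have := h2 this
      rw [hxi'] at this
      exact absurd this (by simp)
end

section
/- Homomorphisms from a bipartite graph G (with chosen bipartition (V1,V2)) to the path P4 on vertices a-b-c-d such that V1 maps into {a,c} and V2 maps into {b,d} are in bijection with pairs (S1, S2) where S1 is a subset of V1, S2 is a subset of V2, and no edge of G joins S1 to S2 (i.e., S1 union S2 is an independent set in the bipartite graph G). -/
/-- Homomorphisms from a bipartite graph `G` (with bipartition `(V₁, V₁ᶜ)`) to
the path `P₄` on vertices `a-b-c-d` (modelled as `pathGraph 4` with `a = 0`,
`b = 1`, `c = 2`, `d = 3`) such that `V₁` maps into `{a, c}` and `V₁ᶜ` maps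
into `{b, d}` are in bijection with pairs `(S₁, S₂)` with `S₁ ⊆ V₁`,
`S₂ ⊆ V₁ᶜ`, and no edge of `G` joining `S₁` to `S₂`; the bijection sends `σ`
to `(σ⁻¹(a), σ⁻¹(d))`. -/
theorem stmt18 {V : Type*} (G : SimpleGraph V) (V₁ : Set V)
    (hbip : ∀ u v : V, G.Adj u v → (u ∈ V₁ ↔ v ∉ V₁)) :
    ∃ e : {σ : V → Fin 4 //
          (∀ u v : V, G.Adj u v → (SimpleGraph.pathGraph 4).Adj (σ u) (σ v)) ∧
          (∀ v ∈ V₁, σ v = 0 ∨ σ v = 2) ∧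
          (∀ v ∉ V₁, σ v = 1 ∨ σ v = 3)} ≃
        {p : Set V × Set V //
          p.1 ⊆ V₁ ∧ p.2 ⊆ V₁ᶜ ∧ ∀ u ∈ p.1, ∀ v ∈ p.2, ¬ G.Adj u v},
      ∀ σ, (e σ : Set V × Set V)
        = ({v : V | σ.val v = 0}, {v : V | σ.val v = 3}) := by
  classical
  refine ⟨{ toFun := fun σ => ⟨({v | σ.1 v = 0}, {v | σ.1 v = 3}), ?_, ?_, ?_⟩
            invFun := fun p => ⟨fun v =>
              if v ∈ p.1.1 then 0 else if v ∈ p.1.2 then 3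
              else if v ∈ V₁ then 2 else 1, ?_, ?_, ?_⟩
            left_inv := ?_
            right_inv := ?_ }, fun σ => rfl⟩
  · -- S₁ ⊆ V₁
    intro v hv
    simp only [Set.mem_setOf_eq] at hv
    by_contra hvn
    rcases σ.2.2.2 v hvn with h | h <;> rw [hv] at h <;> exact absurd h (by decide)
  · -- S₂ ⊆ V₁ᶜ
    intro v hv
    simp only [Set.mem_setOf_eq] at hv
    intro hvn
    rcases σ.2.2.1 v hvn with h | h <;> rw [hv] at h <;> exact absurd h (by decide)
  · -- independence
    intro u hu v hv hadj
    simp only [Set.mem_setOf_eq] at hu hv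
    have h := σ.2.1 u v hadj
    rw [hu, hv] at h
    exact absurd h (by rw [SimpleGraph.pathGraph_adj]; decide)
  · -- inverse is a homomorphism
    obtain ⟨⟨S₁, S₂⟩, hS₁, hS₂, hInd⟩ := p
    intro u v h
    simp only
    have hx := hbip u v h
    by_cases h1 : u ∈ S₁ <;> by_cases h2 : u ∈ S₂ <;>
      by_cases h3 : v ∈ S₁ <;> by_cases h4 : v ∈ S₂ <;>
      by_cases h5 : u ∈ V₁ <;> by_cases h6 : v ∈ V₁ <;>
      simp only [h1, h2, h3, h4, h5, h6, if_true, if_false] <;>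
      first
        | (rw [SimpleGraph.pathGraph_adj]; decide)
        | exact absurd h (hInd u h1 v h4)
        | exact absurd h.symm (hInd v h3 u h2)
        | exact absurd (hS₁ h1) h5
        | exact absurd (hS₁ h3) h6
        | exact absurd (hS₂ h2) (fun hc => hc h5)
        | exact absurd (hS₂ h4) (fun hc => hc h6)
        | tauto
  · -- V₁ → {0,2}
    intro v hv
    have h2 : v ∉ p.1.2 := fun hc => (p.2.2.1 hc) hv
    by_cases h1 : v ∈ p.1.1 <;> simp [h1, h2, hv]
  · -- V₁ᶜ → {1,3}
    intro v hv
    have h1 : v ∉ p.1.1 := fun hc => hv (p.2.1 hc)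
    by_cases h2 : v ∈ p.1.2 <;> simp [h1, h2, hv]
  · -- left inverse
    rintro ⟨σ, hhom, hV1, hV2⟩
    apply Subtype.ext
    funext v
    simp only [Set.mem_setOf_eq]
    by_cases hv : v ∈ V₁
    · rcases hV1 v hv with h | h <;> simp [h, hv]
    · rcases hV2 v hv with h | h <;> simp [h, hv]
  · -- right inverse
    rintro ⟨⟨S₁, S₂⟩, hS₁, hS₂, hInd⟩
    apply Subtype.ext
    simp only
    have hdisj : ∀ v, v ∈ S₁ → v ∉ S₂ := fun v h1 h2 => (hS₂ h2) (hS₁ h1)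
    ext v
    · simp only [Set.mem_setOf_eq]
      by_cases h1 : v ∈ S₁ <;> by_cases h2 : v ∈ S₂ <;>
        by_cases h3 : v ∈ V₁ <;> simp [h1, h2, h3]
    · simp only [Set.mem_setOf_eq]
      by_cases h1 : v ∈ S₁ <;> by_cases h2 : v ∈ S₂ <;>
        by_cases h3 : v ∈ V₁ <;> simp [h1, h2, h3]
      · exact hdisj v h1 h2
      · exact hdisj v h1 h2
end
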